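/- arXiv:2506.24042 — 5 statements merged into one kernel-verified Lean document; each statement's English description precedes it below -/
import Mathlib

section
/- With the noise schedule β₁ = T^{-c₀}, β_t = (c₁ log T / T) · min{β₁(1 + c₁ log T/T)^t, 1} for t ≥ 2, α_t = 1 - β_t, and ᾱ_t = ∏_{i=1}^t α_i, for T large enough one has, for all 2 ≤ t ≤ T: (1/2)(1-α_t)/(1-ᾱ_t) ≤ (1/2)(1-α_t)/(α_t - ᾱ_t) ≤ (1-α_t)/(1-ᾱ_{t-1}) ≤ 4c₁ log T / T. -/
/-!
Write `L = c₁ log T / T` and `b = T^{-c₀}`, so that `β₁ = b` and `β_i = L · min (b (1+L)^i) 1`.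
Since `1 - x ≤ e^{-x}` and `1 + S ≤ e^S`, the product `ᾱ_n = ∏_{i ≤ n} (1 - β_i)` is at most
`1 / (1 + S)` with `S = ∑_{i ≤ n} β_i`. The increments `min (b(1+L)^{i+1}) 1 - min (b(1+L)^i) 1`
are at most `β_i`, so the sum telescopes to `S ≥ b + min (b(1+L)^{n+1}) 1 - b(1+L)^2`; together with
`S ≥ β₁ = b` and `L ≤ 1/10` this gives `S ≥ (4/5) min (b(1+L)^{n+1}) 1`, hence
`1 - ᾱ_n ≥ S / (1 + S) ≥ β_{n+1} / (4L)`. The other two inequalities only use `α_t ≥ 1/2` and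
`ᾱ_t = ᾱ_{t-1} α_t`.
-/

open Finset Filter Topology

theorem one_add_sum_mul_prod_one_sub_le {ι : Type*} (s : Finset ι) (f : ι → ℝ)
    (hf : ∀ i ∈ s, f i ≤ 1) : (1 + ∑ i ∈ s, f i) * ∏ i ∈ s, (1 - f i) ≤ 1 := by
  have hprod_nonneg : 0 ≤ ∏ i ∈ s, (1 - f i) :=
    prod_nonneg fun i hi => sub_nonneg.mpr (hf i hi)
  rcases lt_or_ge (1 + ∑ i ∈ s, f i) 0 with hneg | hnonneg
  · nlinarith
  have hprod_le_exp : ∏ i ∈ s, (1 - f i) ≤ Real.exp (-∑ i ∈ s, f i) := by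
    rw [← sum_neg_distrib, Real.exp_sum]
    exact prod_le_prod (fun i hi => sub_nonneg.mpr (hf i hi))
      fun i _ => Real.one_sub_le_exp_neg (f i)
  calc (1 + ∑ i ∈ s, f i) * ∏ i ∈ s, (1 - f i)
      ≤ Real.exp (∑ i ∈ s, f i) * Real.exp (-∑ i ∈ s, f i) := by
        gcongr
        linarith [Real.add_one_le_exp (∑ i ∈ s, f i)]
    _ = 1 := by rw [← Real.exp_add, add_neg_cancel, Real.exp_zero]

theorem min_mul_one_add_sub_min_le {L : ℝ} (hL : 0 ≤ L) (y : ℝ) :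
    min (y * (1 + L)) 1 - min y 1 ≤ L * min y 1 := by
  rcases le_total y 1 with hy1 | hy1 <;> rcases le_total (y * (1 + L)) 1 with h | h <;>
    simp only [min_eq_left, min_eq_right, hy1, h] <;> nlinarith

theorem tendsto_const_mul_log_div_natCast (c : ℝ) :
    Tendsto (fun T : ℕ => c * Real.log T / T) atTop (𝓝 0) := by
  have := (Real.isLittleO_log_id_atTop.const_mul_left c).tendsto_div_nhds_zero
  simpa [Function.comp_def, mul_div_assoc] using this.comp tendsto_natCast_atTop_atTop

section TwoPhaseSchedule

variable {L b : ℝ} {β : ℕ → ℝ}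

theorem min_sub_min_le_sum_schedule (hL : 0 ≤ L)
    (hβ : ∀ t, 2 ≤ t → β t = L * min (b * (1 + L) ^ t) 1) {n : ℕ} (hn : 2 ≤ n) :
    min (b * (1 + L) ^ n) 1 - min (b * (1 + L) ^ 2) 1 ≤ ∑ i ∈ Ico 2 n, β i := by
  rw [← sum_Ico_sub (fun i => min (b * (1 + L) ^ i) 1) hn]
  refine sum_le_sum fun i hi => ?_
  rw [hβ i (mem_Ico.mp hi).1, pow_succ, ← mul_assoc]
  exact min_mul_one_add_sub_min_le hL _

theorem min_le_four_mul_one_sub_prod_schedule (hL : 0 ≤ L) (hL' : L ≤ 1 / 10) (hb : 0 < b)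
    (hb' : b ≤ 1) (hβ1 : β 1 = b) (hβ : ∀ t, 2 ≤ t → β t = L * min (b * (1 + L) ^ t) 1)
    {n : ℕ} (hn : 1 ≤ n) :
    min (b * (1 + L) ^ (n + 1)) 1 ≤ 4 * (1 - ∏ i ∈ Icc 1 n, (1 - β i)) := by
  have hβ_mem : ∀ i ∈ Icc 1 n, 0 ≤ β i ∧ β i ≤ 1 := by
    intro i hi
    rcases (mem_Icc.mp hi).1.eq_or_lt with rfl | hi2
    · exact ⟨hβ1 ▸ hb.le, hβ1 ▸ hb'⟩
    · rw [hβ i hi2]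
      exact ⟨by positivity, by nlinarith [min_le_right (b * (1 + L) ^ i) 1]⟩
  have hS_split : ∑ i ∈ Icc 1 n, β i = b + ∑ i ∈ Ico 2 (n + 1), β i := by
    rw [← insert_Icc_add_one_left_eq_Icc hn, sum_insert (by simp), hβ1,
      ← Ico_add_one_right_eq_Icc]
    rfl
  set S := ∑ i ∈ Icc 1 n, β i
  set m := min (b * (1 + L) ^ (n + 1)) 1
  have hb_le_S : b ≤ S := hβ1 ▸ single_le_sum (fun i hi => (hβ_mem i hi).1) (by simpa using hn)
  have hm_le_S : m - b * (1 + L) ^ 2 ≤ S - b := by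
    linarith [min_sub_min_le_sum_schedule hL hβ (by omega : 2 ≤ n + 1),
      min_le_left (b * (1 + L) ^ 2) 1]
  have hm_le_five_S : 4 * m ≤ 5 * S := by
    nlinarith [mul_le_mul_of_nonneg_left (by nlinarith : 2 * L + L ^ 2 ≤ 1 / 4) hb.le]
  have hprod := one_add_sum_mul_prod_one_sub_le _ _ fun i hi => (hβ_mem i hi).2
  have hm : 0 ≤ m := le_min (by positivity) zero_le_one
  nlinarith [min_le_right (b * (1 + L) ^ (n + 1)) 1]

end TwoPhaseSchedule

theorem half_div_le_half_div_le_div {a p : ℝ} (ha : 1 / 2 ≤ a) (ha' : a ≤ 1) (hp : p < 1) :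
    1 / 2 * (1 - a) / (1 - p * a) ≤ 1 / 2 * (1 - a) / (a - p * a) ∧
      1 / 2 * (1 - a) / (a - p * a) ≤ (1 - a) / (1 - p) := by
  have hpa : 0 < a - p * a := by nlinarith
  constructor
  · exact div_le_div_of_nonneg_left (by linarith) hpa (by nlinarith)
  · rw [div_le_div_iff₀ hpa (by linarith)]
    nlinarith [mul_nonneg (mul_nonneg (sub_nonneg.mpr ha') (sub_nonneg.mpr hp.le))
      (sub_nonneg.mpr ha)]

/-- With the two-phase noise schedule `β₁ = T^{-c₀}`,
`β_t = (c₁ log T / T) · min{β₁ (1 + c₁ log T / T)^t, 1}` for `t ≥ 2`, `α_t = 1 - β_t`, and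
`ᾱ_t = ∏_{i=1}^t α_i`, for `T` large enough one has, for all `2 ≤ t ≤ T`:
`(1/2)(1-α_t)/(1-ᾱ_t) ≤ (1/2)(1-α_t)/(α_t-ᾱ_t) ≤ (1-α_t)/(1-ᾱ_{t-1}) ≤ 4c₁ log T / T`. -/
theorem statement1 (c₀ c₁ : ℝ) (hc₀ : 0 < c₀) (hc₁ : 0 < c₁) :
    ∃ T₀ : ℕ, ∀ T : ℕ, T₀ ≤ T →
      ∀ β : ℕ → ℝ,
        β 1 = (T : ℝ) ^ (-c₀) →
        (∀ t, 2 ≤ t →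
          β t = c₁ * Real.log T / T *
            min ((T : ℝ) ^ (-c₀) * (1 + c₁ * Real.log T / T) ^ t) 1) →
        ∀ α : ℕ → ℝ, (∀ t, α t = 1 - β t) →
        ∀ αbar : ℕ → ℝ, (∀ t, αbar t = ∏ i ∈ Finset.Icc 1 t, α i) →
        ∀ t, 2 ≤ t → t ≤ T →
          (1 / 2) * (1 - α t) / (1 - αbar t) ≤ (1 / 2) * (1 - α t) / (α t - αbar t) ∧
          (1 / 2) * (1 - α t) / (α t - αbar t) ≤ (1 - α t) / (1 - αbar (t - 1)) ∧
          (1 - α t) / (1 - αbar (t - 1)) ≤ 4 * c₁ * Real.log T / T := by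
  obtain ⟨T₀, hT₀⟩ := eventually_atTop.mp <| (eventually_ge_atTop 1).and <|
    (tendsto_const_mul_log_div_natCast c₁).eventually_le_const (by norm_num : (0 : ℝ) < 1 / 10)
  refine ⟨T₀, fun T hT β hβ1 hβ α hα αbar hαbar t ht _ => ?_⟩
  obtain ⟨hT_ge_one, hL⟩ := hT₀ T hT
  have hT1 : (1 : ℝ) ≤ T := by exact_mod_cast hT_ge_one
  set L := c₁ * Real.log T / T
  set b := (T : ℝ) ^ (-c₀)
  have hL0 : 0 ≤ L := by have := Real.log_nonneg hT1; positivity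
  have hb0 : 0 < b := Real.rpow_pos_of_pos (by linarith) _
  have hb1 : b ≤ 1 := Real.rpow_le_one_of_one_le_of_nonpos hT1 (by linarith)
  obtain ⟨n, rfl⟩ : ∃ n, t = n + 1 := ⟨t - 1, by omega⟩
  have hαbar_n : αbar n = ∏ i ∈ Icc 1 n, (1 - β i) := by
    rw [hαbar]
    exact prod_congr rfl fun i _ => hα i
  have hαbar_succ : αbar (n + 1) = αbar n * α (n + 1) := by
    rw [hαbar, hαbar, prod_Icc_succ_top (by omega)]
  have hmin_le := min_le_four_mul_one_sub_prod_schedule hL0 hL hb0 hb1 hβ1 hβ (n := n) (by omega)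
  rw [← hαbar_n] at hmin_le
  have hmin_pos : 0 < min (b * (1 + L) ^ (n + 1)) 1 := lt_min (by positivity) one_pos
  have hαbar_lt : αbar n < 1 := by linarith
  have hβ_le : β (n + 1) ≤ L := by
    rw [hβ _ ht]
    exact mul_le_of_le_one_right hL0 (min_le_right _ _)
  have hα_ge : 1 / 2 ≤ α (n + 1) := by rw [hα]; linarith
  have hα_le : α (n + 1) ≤ 1 := by rw [hα, hβ _ ht]; linarith [mul_nonneg hL0 hmin_pos.le]
  rw [Nat.add_sub_cancel, hαbar_succ]
  obtain ⟨hfirst, hsecond⟩ := half_div_le_half_div_le_div hα_ge hα_le hαbar_lt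
  refine ⟨hfirst, hsecond, ?_⟩
  rw [div_le_iff₀ (sub_pos.mpr hαbar_lt), hα, sub_sub_cancel, hβ _ ht]
  calc L * min (b * (1 + L) ^ (n + 1)) 1 ≤ L * (4 * (1 - αbar n)) :=
        mul_le_mul_of_nonneg_left hmin_le hL0
    _ = 4 * c₁ * Real.log T / T * (1 - αbar n) := by ring
end

section
/- With the noise schedule β₁ = T^{-c₀}, β_t = (c₁ log T/T) min{β₁(1+c₁ log T/T)^t, 1}, α_t = 1-β_t, ᾱ_t = ∏_{i≤t} α_i, for T large enough and all 2 ≤ t ≤ T: 1 ≤ (1-ᾱ_t)/(1-ᾱ_{t-1}) ≤ 1 + 4c₁ log T / T. -/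
open Finset Filter Real

private lemma statement2_exp_aux (u : ℝ) (h0 : 0 ≤ u) (h1 : u ≤ 1) :
    Real.exp (-u) ≤ 1 - u / 2 := by
  have h := Real.add_one_le_exp u
  have h2 : Real.exp u * Real.exp (-u) = 1 := by rw [← Real.exp_add]; simp
  have h3 : 0 < Real.exp (-u) := Real.exp_pos _
  nlinarith

set_option maxHeartbeats 1600000 in
/-- With the two-phase noise schedule `β₁ = T^{-c₀}`,
`β_t = (c₁ log T / T) · min{β₁ (1 + c₁ log T / T)^t, 1}` for `t ≥ 2`, `α_t = 1 - β_t`, and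
`ᾱ_t = ∏_{i=1}^t α_i`, for `T` large enough one has, for all `2 ≤ t ≤ T`:
`1 ≤ (1-ᾱ_t)/(1-ᾱ_{t-1}) ≤ 1 + 4c₁ log T / T`. -/
theorem statement2 (c₀ c₁ : ℝ) (hc₀ : 0 < c₀) (hc₁ : 0 < c₁) :
    ∃ T₀ : ℕ, ∀ T : ℕ, T₀ ≤ T →
      ∀ β : ℕ → ℝ,
        β 1 = (T : ℝ) ^ (-c₀) →
        (∀ t, 2 ≤ t →
          β t = c₁ * Real.log T / T *
            min ((T : ℝ) ^ (-c₀) * (1 + c₁ * Real.log T / T) ^ t) 1) →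
        ∀ αbar : ℕ → ℝ, (∀ t, αbar t = ∏ i ∈ Finset.Icc 1 t, (1 - β i)) →
        ∀ t, 2 ≤ t → t ≤ T →
          1 ≤ (1 - αbar t) / (1 - αbar (t - 1)) ∧
          (1 - αbar t) / (1 - αbar (t - 1)) ≤ 1 + 4 * c₁ * Real.log T / T := by
  have hA' : Tendsto (fun n : ℕ => (n : ℝ) ^ (-c₀)) atTop (nhds 0) :=
    (tendsto_rpow_neg_atTop hc₀).comp tendsto_natCast_atTop_atTop
  have hB' : Tendsto (fun n : ℕ => c₁ * Real.log n / n) atTop (nhds 0) := by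
    have h := Real.isLittleO_log_id_atTop.tendsto_div_nhds_zero
    have h2 := (h.const_mul c₁).comp tendsto_natCast_atTop_atTop
    simp only [mul_zero] at h2
    refine h2.congr fun n => ?_
    simp [Function.comp, mul_div_assoc]
  have hEv : ∀ᶠ (n : ℕ) in atTop,
      ((n : ℝ) ^ (-c₀) ≤ 1/2 ∧ c₁ * Real.log n / n ≤ 1/5) ∧ 2 ≤ n :=
    ((hA'.eventually_le_const (by norm_num)).and
      (hB'.eventually_le_const (by norm_num))).and (eventually_ge_atTop 2)
  obtain ⟨T₀, hT₀⟩ := eventually_atTop.1 hEv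
  refine ⟨T₀, fun T hT β hβ1 hβ αbar hαbar t ht2 htT => ?_⟩
  obtain ⟨⟨hA, hb5⟩, hT2⟩ := hT₀ T hT
  clear hA' hB' hEv hT₀ hT
  set A := (T : ℝ) ^ (-c₀) with hAdef
  set b := c₁ * Real.log T / T with hbdef
  have hT1 : (1 : ℝ) < T := by exact_mod_cast Nat.lt_of_lt_of_le one_lt_two hT2
  have hApos : 0 < A := Real.rpow_pos_of_pos (by linarith) _
  have hbpos : 0 < b :=
    div_pos (mul_pos hc₁ (Real.log_pos hT1)) (by linarith)
  set m : ℕ → ℝ := fun i => min (A * (1 + b) ^ i) 1 with hm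
  have hmdef : ∀ i, m i = min (A * (1 + b) ^ i) 1 := fun i => rfl
  have hβm : ∀ i, 2 ≤ i → β i = b * m i := fun i hi => hβ i hi
  clear_value A b m
  clear hβ hm
  have hgpos : ∀ i : ℕ, 0 < A * (1 + b) ^ i :=
    fun i => mul_pos hApos (pow_pos (by linarith) _)
  have hmpos : ∀ i, 0 < m i := fun i => by
    rw [hmdef]; exact lt_min (hgpos i) one_pos
  have hmle1 : ∀ i, m i ≤ 1 := fun i => by
    rw [hmdef]; exact min_le_right _ _
  have hβpos : ∀ i, 1 ≤ i → 0 < β i := by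
    intro i hi
    rcases eq_or_lt_of_le hi with h | h
    · rw [← h, hβ1]; exact hApos
    · rw [hβm i h]; exact mul_pos hbpos (hmpos i)
  have hβle : ∀ i, 1 ≤ i → β i ≤ 1/2 := by
    intro i hi
    rcases eq_or_lt_of_le hi with h | h
    · rw [← h, hβ1]; exact hA
    · rw [hβm i h]
      nlinarith [hmpos i, hmle1 i, hbpos, hb5]
  -- key sum lower bound
  have key : ∀ s : ℕ, 1 ≤ s → m (s + 1) - A / 2 ≤ ∑ i ∈ Icc 1 s, β i := by
    intro s hs
    induction s, hs using Nat.le_induction with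
    | base =>
      rw [show Icc 1 1 = {1} from rfl, Finset.sum_singleton, hβ1]
      have e : (1 : ℕ) + 1 = 2 := rfl
      rw [e]
      have h2 : m 2 ≤ A * (1 + b) ^ 2 := by rw [hmdef]; exact min_le_left _ _
      have hbb : b ^ 2 ≤ 1 / 25 := by nlinarith [hbpos, hb5]
      have h4 : A * b ≤ A * (1 / 5) := mul_le_mul_of_nonneg_left hb5 hApos.le
      have h5 : A * b ^ 2 ≤ A * (1 / 25) := mul_le_mul_of_nonneg_left hbb hApos.le
      have hexp : A * (1 + b) ^ 2 = A + 2 * (A * b) + A * b ^ 2 := by ring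
      linarith [hApos, h2, h4, h5, hexp.le, hexp.ge]
    | succ s hs ih =>
      rw [Finset.sum_Icc_succ_top (by omega)]
      have hstep : m (s + 2) ≤ m (s + 1) + β (s + 1) := by
        rw [hβm (s + 1) (by omega)]
        have h1 : A * (1 + b) ^ (s + 2) = (1 + b) * (A * (1 + b) ^ (s + 1)) := by ring
        rcases le_total (A * (1 + b) ^ (s + 1)) 1 with h | h
        · have h4 : m (s + 2) ≤ A * (1 + b) ^ (s + 2) := by
            rw [hmdef]; exact min_le_left _ _
          rw [hmdef (s + 1), min_eq_left h]
          nlinarith [h4, h1.le, hbpos]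
        · have h3 : m (s + 2) ≤ 1 := hmle1 _
          rw [hmdef (s + 1), min_eq_right h]
          nlinarith [hgpos (s + 1), h3, hbpos]
      have heq : m (s + 1 + 1) = m (s + 2) := by norm_num
      rw [heq]
      linarith
  -- setup at t
  have hnt : t - 1 + 1 = t := by omega
  set S := ∑ i ∈ Icc 1 (t - 1), β i with hS
  set P := ∏ i ∈ Icc 1 (t - 1), (1 - β i) with hP
  clear_value S P
  have hmemle : ∀ i ∈ Icc 1 (t - 1), 0 ≤ 1 - β i := by
    intro i hi
    have hi1 : 1 ≤ i := (Finset.mem_Icc.1 hi).1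
    have := hβle i hi1
    linarith
  have hP1 : P ≤ 1 := by
    rw [hP]
    apply Finset.prod_le_one hmemle
    intro i hi
    have := hβpos i (Finset.mem_Icc.1 hi).1
    linarith
  have hPe : P ≤ Real.exp (-S) := by
    calc P ≤ ∏ i ∈ Icc 1 (t - 1), Real.exp (-β i) := by
          rw [hP]
          apply Finset.prod_le_prod hmemle
          intro i hi
          have := Real.add_one_le_exp (-β i)
          linarith
      _ = Real.exp (∑ i ∈ Icc 1 (t - 1), -β i) := (Real.exp_sum _ _).symm
      _ = Real.exp (-S) := by rw [hS, ← Finset.sum_neg_distrib]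
  -- S ≥ m t / 2
  have hkey : m t - A / 2 ≤ S := by
    rw [hS]
    have := key (t - 1) (by omega)
    rwa [hnt] at this
  have hm2 : A ≤ m t := by
    have h4 : A * b ≤ A * (1 / 5) := mul_le_mul_of_nonneg_left hb5 hApos.le
    have hbb : b ^ 2 ≤ 1 / 25 := by nlinarith
    have h5 : A * b ^ 2 ≤ A * (1 / 25) := mul_le_mul_of_nonneg_left hbb hApos.le
    have h6 : 0 ≤ A * b := (mul_pos hApos hbpos).le
    have h7 : 0 ≤ A * b ^ 2 := mul_nonneg hApos.le (sq_nonneg b)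
    have hexp : A * (1 + b) ^ 2 = A + 2 * (A * b) + A * b ^ 2 := by ring
    have hg2 : A ≤ A * (1 + b) ^ 2 := by rw [hexp]; linarith
    have hg2' : A * (1 + b) ^ 2 ≤ 1 := by rw [hexp]; linarith
    have hmono : A * (1 + b) ^ 2 ≤ A * (1 + b) ^ t := by
      have hp := pow_le_pow_right₀ (a := 1 + b) (by linarith) ht2
      exact mul_le_mul_of_nonneg_left hp hApos.le
    calc A ≤ A * (1 + b) ^ 2 := hg2
      _ = min (A * (1 + b) ^ 2) 1 := (min_eq_left hg2').symm
      _ ≤ m t := by rw [hmdef]; exact min_le_min hmono le_rfl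
  have hSm : m t / 2 ≤ S := by linarith
  -- 1 - P ≥ m t / 4
  have hu : m t / 2 ≤ min S 1 := le_min hSm (by have := hmle1 t; linarith)
  have hu0 : 0 ≤ min S 1 := by have := hmpos t; linarith
  have hu1 : min S 1 ≤ 1 := min_le_right _ _
  have hPle : P ≤ 1 - m t / 4 := by
    have h1 : Real.exp (-S) ≤ Real.exp (-(min S 1)) := by
      apply Real.exp_le_exp.2
      have : min S 1 ≤ S := min_le_left _ _
      linarith
    have h2 := statement2_exp_aux (min S 1) hu0 hu1
    linarith
  have hD : m t / 4 ≤ 1 - P := by linarith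
  have hD0 : 0 < 1 - P := by have := hmpos t; linarith
  -- product split
  have hsplit : (∏ i ∈ Icc 1 t, (1 - β i)) = P * (1 - β t) := by
    rw [hP]
    conv_lhs => rw [← hnt]
    rw [Finset.prod_Icc_succ_top (by omega), hnt]
  have hαt : 1 - αbar t = (1 - P) + P * β t := by
    rw [hαbar t, hsplit]; ring
  have hαt1 : 1 - αbar (t - 1) = 1 - P := by rw [hαbar (t - 1), hP]
  have hβt : β t = b * m t := hβm t ht2
  have hPpos : 0 < P := by
    rw [hP]
    apply Finset.prod_pos
    intro i hi
    have := hβle i (Finset.mem_Icc.1 hi).1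
    linarith
  constructor
  · rw [hαt, hαt1]
    rw [le_div_iff₀ hD0]
    have : 0 ≤ P * β t := le_of_lt (mul_pos hPpos (hβpos t (by omega)))
    linarith
  · rw [hαt, hαt1, div_le_iff₀ hD0]
    have h4b : 1 + 4 * c₁ * Real.log T / T = 1 + 4 * b := by rw [hbdef]; ring
    rw [h4b]
    have hβtpos : 0 < β t := hβpos t (by omega)
    have h1 : P * β t ≤ b * m t := by
      rw [hβt] at hβtpos ⊢
      nlinarith [hβtpos, hmpos t, hPpos, hP1]
    have h2 : b * m t ≤ 4 * b * (1 - P) := by nlinarith [hmpos t, hbpos, hD]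
    nlinarith [hbpos, hD0, h1, h2, hPpos.le, hβpos t (by omega : 1 ≤ t)]
end

section
/- With the noise schedule β₁ = T^{-c₀} and β_t = (c₁ log T/T) min{β₁(1+c₁ log T/T)^t, 1} (t ≥ 2), setting α_t = 1-β_t and ᾱ_t = ∏_{i≤t} α_i, for any fixed c₂ > 0 one has ᾱ_T ≤ T^{-c₂} provided the constant c₁ is chosen large enough and T is sufficiently large. -/
open Finset

set_option maxHeartbeats 1000000 in
/-- With the two-phase noise schedule `β₁ = T^{-c₀}`,
`β_t = (c₁ log T / T) · min{β₁ (1 + c₁ log T / T)^t, 1}` for `t ≥ 2`, and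
`ᾱ_t = ∏_{i=1}^t (1 - β_i)`, for any fixed `c₂ > 0` one has `ᾱ_T ≤ T^{-c₂}` provided the
constant `c₁` is chosen large enough and `T` is sufficiently large. -/
theorem statement3 (c₀ : ℝ) (hc₀ : 0 < c₀) (c₂ : ℝ) (hc₂ : 0 < c₂) :
    ∃ C : ℝ, ∀ c₁ : ℝ, C ≤ c₁ →
      ∃ T₀ : ℕ, ∀ T : ℕ, T₀ ≤ T →
        ∀ β : ℕ → ℝ,
          β 1 = (T : ℝ) ^ (-c₀) →
          (∀ t, 2 ≤ t →
            β t = c₁ * Real.log T / T *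
              min ((T : ℝ) ^ (-c₀) * (1 + c₁ * Real.log T / T) ^ t) 1) →
          ∏ i ∈ Finset.Icc 1 T, (1 - β i) ≤ (T : ℝ) ^ (-c₂) := by
  refine ⟨max (4*c₀) (2*c₂), fun c₁ hc₁ => ?_⟩
  have hc₁4 : 4*c₀ ≤ c₁ := le_trans (le_max_left _ _) hc₁
  have hc₁2 : 2*c₂ ≤ c₁ := le_trans (le_max_right _ _) hc₁
  have hc₁0 : 0 < c₁ := lt_of_lt_of_le (by positivity) hc₁2
  have hev : ∀ᶠ (y:ℝ) in Filter.atTop, c₁ * Real.log y / y ≤ 1/2 := by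
    have h := Real.isLittleO_log_id_atTop.bound (c := 1/(4*c₁)) (by positivity)
    filter_upwards [h, Filter.eventually_ge_atTop (1:ℝ)] with y hy hy1
    have hy0 : (0:ℝ) < y := lt_of_lt_of_le one_pos hy1
    simp only [Real.norm_eq_abs, id_eq] at hy
    rw [abs_of_nonneg (Real.log_nonneg hy1), abs_of_nonneg hy0.le] at hy
    rw [div_le_iff₀ hy0]
    have h1 : c₁ * Real.log y ≤ c₁ * (1/(4*c₁) * y) :=
      mul_le_mul_of_nonneg_left hy hc₁0.le
    have h2 : c₁ * (1/(4*c₁) * y) = y/4 := by field_simp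
    nlinarith
  obtain ⟨M, hM⟩ := Filter.eventually_atTop.mp hev
  refine ⟨max ⌈M⌉₊ 4, fun T hT β hβ1 hβ => ?_⟩
  have hT4 : 4 ≤ T := le_trans (le_max_right _ _) hT
  have hTM : M ≤ (T:ℝ) :=
    le_trans (Nat.le_ceil M) (Nat.cast_le.mpr (le_trans (le_max_left _ _) hT))
  have hT0 : (0:ℝ) < T := by
    have : (4:ℝ) ≤ (T:ℝ) := by exact_mod_cast hT4
    linarith
  have hT1 : (1:ℝ) ≤ (T:ℝ) := by
    have : (4:ℝ) ≤ (T:ℝ) := by exact_mod_cast hT4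
    linarith
  set x := c₁ * Real.log (T:ℝ) / T with hxdef
  have hlogT : 0 ≤ Real.log T := Real.log_nonneg hT1
  have hx0 : 0 ≤ x := by positivity
  have hx12 : x ≤ 1/2 := hM T hTM
  set K := T/2 + 1 with hKdef
  have hK2 : 2 ≤ K := by omega
  have hKT : K ≤ T := by omega
  -- saturation on Icc K T
  have hsat : ∀ i ∈ Finset.Icc K T, β i = x := by
    intro i hi
    rw [Finset.mem_Icc] at hi
    have hi2 : 2 ≤ i := le_trans hK2 hi.1
    rw [hβ i hi2]
    have h1x : (0:ℝ) < 1 + x := by linarith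
    -- log (1+x) ≥ x/2
    have hlog1x : x/2 ≤ Real.log (1+x) := by
      have h := Real.log_le_sub_one_of_pos (show (0:ℝ) < (1+x)⁻¹ by positivity)
      rw [Real.log_inv] at h
      have hmul : (1+x) * (1+x)⁻¹ = 1 := mul_inv_cancel₀ h1x.ne'
      nlinarith
    -- (i:ℝ) ≥ T/2
    have hiT : (T:ℝ)/2 ≤ (i:ℝ) := by
      have h1 : T ≤ 2 * i := by omega
      have h2 : (T:ℝ) ≤ 2 * (i:ℝ) := by exact_mod_cast h1
      linarith
    -- c₀ log T ≤ i log (1+x)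
    have hkey : c₀ * Real.log T ≤ (i:ℝ) * Real.log (1+x) := by
      have hTx : (T:ℝ) * x = c₁ * Real.log T := by
        rw [hxdef]; field_simp
      have h1 : (T:ℝ)/2 * (x/2) ≤ (i:ℝ) * Real.log (1+x) := by
        apply mul_le_mul hiT hlog1x (by linarith) (by positivity)
      nlinarith
    have hpow : (T:ℝ) ^ c₀ ≤ (1+x)^i := by
      have he : ((1:ℝ)+x)^i = Real.exp ((i:ℝ) * Real.log (1+x)) := by
        rw [← Real.log_pow, Real.exp_log (pow_pos h1x i)]
      rw [he, Real.rpow_def_of_pos hT0]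
      exact Real.exp_le_exp.mpr (by linarith [hkey])
    have hmin : min ((T : ℝ) ^ (-c₀) * (1 + x) ^ i) 1 = 1 := by
      apply min_eq_right
      have hp : (0:ℝ) < (T:ℝ) ^ c₀ := Real.rpow_pos_of_pos hT0 c₀
      rw [Real.rpow_neg hT0.le]
      calc (1:ℝ) = ((T:ℝ)^c₀)⁻¹ * (T:ℝ)^c₀ := by field_simp
        _ ≤ ((T:ℝ)^c₀)⁻¹ * (1+x)^i := mul_le_mul_of_nonneg_left hpow (by positivity)
    rw [hmin, mul_one]
  -- factors are in [0,1]
  have hfac : ∀ i ∈ Finset.Icc 1 T, 0 ≤ 1 - β i ∧ 1 - β i ≤ 1 := by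
    intro i hi
    rw [Finset.mem_Icc] at hi
    rcases eq_or_lt_of_le hi.1 with h1 | h2
    · rw [← h1, hβ1]
      constructor
      · have : (T:ℝ) ^ (-c₀) ≤ 1 :=
          Real.rpow_le_one_of_one_le_of_nonpos hT1 (by linarith)
        linarith
      · have : (0:ℝ) ≤ (T:ℝ) ^ (-c₀) := Real.rpow_nonneg hT0.le _
        linarith
    · rw [hβ i h2]
      have ha : (0:ℝ) ≤ (T : ℝ) ^ (-c₀) * (1 + x) ^ i := by positivity
      have hm0 : 0 ≤ min ((T : ℝ) ^ (-c₀) * (1 + x) ^ i) 1 := le_min ha zero_le_one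
      have hm1 : min ((T : ℝ) ^ (-c₀) * (1 + x) ^ i) 1 ≤ 1 := min_le_right _ _
      constructor
      · nlinarith
      · nlinarith
  -- main estimate
  have hsubset : Finset.Icc K T ⊆ Finset.Icc 1 T := Finset.Icc_subset_Icc (by omega) le_rfl
  set N := (Finset.Icc K T).card with hNdef
  have hNcard : N = T - T/2 := by
    rw [hNdef, Nat.card_Icc]; omega
  have hNT : (T:ℝ)/2 ≤ (N:ℝ) := by
    have h1 : T ≤ 2 * N := by omega
    have h2 : (T:ℝ) ≤ 2 * (N:ℝ) := by exact_mod_cast h1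
    linarith
  have hprodK : ∏ i ∈ Finset.Icc K T, (1 - β i) = (1-x)^N := by
    rw [Finset.prod_congr rfl (fun i hi => by rw [hsat i hi]), Finset.prod_const]
  have hstep : ∏ i ∈ Finset.Icc 1 T, (1 - β i) ≤ (1-x)^N := by
    rw [← Finset.prod_sdiff hsubset, hprodK]
    have h1 : ∏ i ∈ Finset.Icc 1 T \ Finset.Icc K T, (1 - β i) ≤ 1 :=
      Finset.prod_le_one (fun i hi => (hfac i (Finset.mem_sdiff.mp hi).1).1)
        (fun i hi => (hfac i (Finset.mem_sdiff.mp hi).1).2)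
    have h2 : (0:ℝ) ≤ (1-x)^N := pow_nonneg (by linarith) N
    calc (∏ i ∈ Finset.Icc 1 T \ Finset.Icc K T, (1 - β i)) * (1-x)^N
        ≤ 1 * (1-x)^N := mul_le_mul_of_nonneg_right h1 h2
      _ = (1-x)^N := one_mul _
  calc ∏ i ∈ Finset.Icc 1 T, (1 - β i) ≤ (1-x)^N := hstep
    _ ≤ Real.exp (-x) ^ N := by
        apply pow_le_pow_left₀ (by linarith)
        linarith [Real.add_one_le_exp (-x)]
    _ = Real.exp (-(x * N)) := by
        rw [← Real.exp_nat_mul]; congr 1; ring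
    _ ≤ Real.exp (-(c₂ * Real.log T)) := by
        apply Real.exp_le_exp.mpr
        have hTx : (T:ℝ) * x = c₁ * Real.log T := by rw [hxdef]; field_simp
        have h1 : x * ((T:ℝ)/2) ≤ x * N := mul_le_mul_of_nonneg_left hNT hx0
        nlinarith
    _ = (T:ℝ) ^ (-c₂) := by
        rw [Real.rpow_def_of_pos hT0]; congr 1; ring
end

section
/- With X̄_τ = √(1-τ)X₀ + √τ Z, the Jacobian of the score function satisfies ∂s*_τ(x)/∂x = -(1/τ) I_d + (1/τ²) Cov(X̄_τ - √(1-τ)X₀ | X̄_τ = x), where Cov denotes the conditional covariance matrix. -/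
/-!
With `φ(u) = exp (-‖u‖² / 2τ)` and `b ω = √(1-τ) ω`, the density is `p = c P` where
`P(y) = ∫ φ(y - b ω) dμ` (`gaussConv`); let `S(y) = ∫ φ(y - b ω) (y - b ω) dμ` (`gaussConvMoment`)
and `Q(y) = ∫ φ(y - b ω) (y - b ω)(y - b ω)ᵀ dμ` (`gaussConvSecondMoment`).
Since `∇φ(u) = -τ⁻¹ φ(u) u`, differentiating under the integral gives `∇P = -τ⁻¹ S`, so
`∇ log p = -τ⁻¹ S / P`, and `DS = P I - τ⁻¹ Q`. The quotient rule then gives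
`D ∇ log p = -τ⁻¹ I + τ⁻² (Q / P - (S / P)(S / P)ᵀ)`, and `Q / P - (S / P)(S / P)ᵀ` is the
conditional covariance. All integrands are dominated by constants because `‖u‖ᵏ φ(u)` is bounded
for `k ≤ 2` (as `s e⁻ˢ ≤ 1`).
-/

open MeasureTheory Real
open scoped InnerProductSpace

section Gauss

variable {E : Type*} [NormedAddCommGroup E]

noncomputable def gauss (τ : ℝ) (u : E) : ℝ := exp (-‖u‖ ^ 2 / (2 * τ))

variable {τ : ℝ}

lemma gauss_pos (u : E) : 0 < gauss τ u := exp_pos _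

@[fun_prop]
lemma continuous_gauss : Continuous (gauss τ : E → ℝ) := by
  unfold gauss; fun_prop

lemma gauss_le_one (hτ : 0 < τ) (u : E) : gauss τ u ≤ 1 :=
  exp_le_one_iff.mpr (div_nonpos_of_nonpos_of_nonneg (by simp) (by positivity))

lemma norm_gauss_le_one (hτ : 0 < τ) (u : E) : ‖gauss τ u‖ ≤ 1 := by
  rw [norm_of_nonneg (gauss_pos u).le]; exact gauss_le_one hτ u

lemma sq_norm_mul_gauss_le (hτ : 0 < τ) (u : E) : ‖u‖ ^ 2 * gauss τ u ≤ 2 * τ := by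
  set s := ‖u‖ ^ 2 / (2 * τ)
  have hs : s * exp (-s) ≤ 1 := by
    rw [← le_div_iff₀ (exp_pos _), exp_neg, div_inv_eq_mul, one_mul]
    linarith [add_one_le_exp s]
  calc ‖u‖ ^ 2 * gauss τ u = 2 * τ * (s * exp (-s)) := by
        unfold gauss s; rw [neg_div]; field_simp
    _ ≤ 2 * τ := mul_le_of_le_one_right (by positivity) hs

lemma norm_mul_gauss_le (hτ : 0 < τ) (u : E) : ‖u‖ * gauss τ u ≤ 1 + 2 * τ := by
  have hu : ‖u‖ ≤ 1 + ‖u‖ ^ 2 := by nlinarith [sq_nonneg (‖u‖ - 1)]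
  calc ‖u‖ * gauss τ u ≤ (1 + ‖u‖ ^ 2) * gauss τ u :=
        mul_le_mul_of_nonneg_right hu (gauss_pos u).le
    _ ≤ 1 + 2 * τ := by
        rw [add_mul, one_mul]; linarith [gauss_le_one hτ u, sq_norm_mul_gauss_le hτ u]

variable [NormedSpace ℝ E]

lemma norm_gauss_smul_le (hτ : 0 < τ) (u : E) : ‖gauss τ u • u‖ ≤ 1 + 2 * τ := by
  rw [norm_smul, norm_of_nonneg (gauss_pos u).le, mul_comm]
  exact norm_mul_gauss_le hτ u

end Gauss

section GaussInner

variable {E : Type*} [NormedAddCommGroup E] [InnerProductSpace ℝ E] {τ : ℝ}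

lemma norm_gauss_smul_smulRight_le (hτ : 0 < τ) (u : E) :
    ‖gauss τ u • (innerSL ℝ u).smulRight u‖ ≤ 2 * τ := by
  rw [norm_smul, ContinuousLinearMap.norm_smulRight_apply, innerSL_apply_norm,
    norm_of_nonneg (gauss_pos u).le, ← sq, mul_comm]
  exact sq_norm_mul_gauss_le hτ u

variable [CompleteSpace E]

lemma hasGradientAt_gauss (u : E) : HasGradientAt (gauss τ) (-τ⁻¹ • gauss τ u • u) u := by
  rw [hasGradientAt_iff_hasFDerivAt]
  have h := ((hasStrictFDerivAt_norm_sq u).hasFDerivAt.mul_const (-(2 * τ)⁻¹)).exp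
  refine (h.congr_fderiv ?_).congr_of_eventuallyEq (.of_forall fun x => ?_)
  · ext v
    simp only [gauss, mul_inv_rev, mul_neg, neg_smul, smul_neg, neg_apply, smul_apply,
      coe_innerSL_apply, nsmul_eq_mul, Nat.cast_ofNat, smul_eq_mul, map_neg, map_smul,
      InnerProductSpace.toDual_apply_apply, neg_inj]
    ring_nf
  · simp only [gauss]; ring_nf

lemma hasFDerivAt_gauss_smul (u : E) :
    HasFDerivAt (fun u => gauss τ u • u)
      (gauss τ u • ContinuousLinearMap.id ℝ E
        - τ⁻¹ • gauss τ u • (innerSL ℝ u).smulRight u) u := by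
  refine ((hasGradientAt_gauss u).hasFDerivAt.smul (hasFDerivAt_id u)).congr_fderiv ?_
  ext v
  simp only [neg_smul, map_neg, map_smul, id_eq, add_apply, smul_apply,
    ContinuousLinearMap.id_apply, ContinuousLinearMap.smulRight_apply, neg_apply,
    InnerProductSpace.toDual_apply_apply, smul_eq_mul, sub_apply, coe_innerSL_apply]
  module

end GaussInner

lemma inv_mul_smul_integral_const_mul_smul {Ω E : Type*} [MeasurableSpace Ω] {μ : Measure Ω}
    [NormedAddCommGroup E] [NormedSpace ℝ E] {c : ℝ} (hc : c ≠ 0) (P : ℝ) (f : Ω → ℝ)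
    (g : Ω → E) : (c * P)⁻¹ • ∫ ω, (c * f ω) • g ω ∂μ = P⁻¹ • ∫ ω, f ω • g ω ∂μ := by
  simp_rw [mul_smul]
  rw [integral_smul, smul_smul, mul_inv_rev, mul_assoc, inv_mul_cancel₀ hc, mul_one]

section ParametricIntegral

variable {Ω E G : Type*} [MeasurableSpace Ω] {μ : Measure Ω} [IsFiniteMeasure μ]
  [NormedAddCommGroup E] [NormedAddCommGroup G] {b : Ω → E}

lemma integrable_comp_sub {F : E → G} (hF : Continuous F) {C : ℝ} (hFC : ∀ u, ‖F u‖ ≤ C)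
    (hb : AEStronglyMeasurable b μ) (y : E) : Integrable (fun ω => F (y - b ω)) μ :=
  .mono' (integrable_const C) (hF.comp_aestronglyMeasurable (aestronglyMeasurable_const.sub hb))
    (.of_forall fun _ => hFC _)

variable [NormedSpace ℝ E] [NormedSpace ℝ G]

lemma hasFDerivAt_integral_comp_sub {F : E → G} {F' : E → E →L[ℝ] G}
    (hF : ∀ u, HasFDerivAt F (F' u) u) {C C' : ℝ} (hFC : ∀ u, ‖F u‖ ≤ C)
    (hF' : Continuous F') (hF'C : ∀ u, ‖F' u‖ ≤ C') (hb : AEStronglyMeasurable b μ) (y : E) :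
    HasFDerivAt (fun y => ∫ ω, F (y - b ω) ∂μ) (∫ ω, F' (y - b ω) ∂μ) y := by
  have hFc : Continuous F := continuous_iff_continuousAt.mpr fun u => (hF u).continuousAt
  refine hasFDerivAt_integral_of_dominated_of_fderiv_le (F' := fun z ω => F' (z - b ω))
    (bound := fun _ => C') Filter.univ_mem
    (.of_forall fun z => (integrable_comp_sub hFc hFC hb z).aestronglyMeasurable)
    (integrable_comp_sub hFc hFC hb y) (integrable_comp_sub hF' hF'C hb y).aestronglyMeasurable
    (.of_forall fun _ _ _ => hF'C _) (integrable_const C') (.of_forall fun ω z _ => ?_)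
  exact (hF _).comp z ((hasFDerivAt_id z).sub_const (b ω)) |>.congr_fderiv (by ext; simp)

end ParametricIntegral

section GaussConv

variable {Ω E : Type*} [MeasurableSpace Ω] [NormedAddCommGroup E] {τ : ℝ} {μ : Measure Ω}
  {b : Ω → E}

variable (τ μ b) in
noncomputable def gaussConv (y : E) : ℝ := ∫ ω, gauss τ (y - b ω) ∂μ

lemma gaussConv_pos [IsFiniteMeasure μ] [NeZero μ] (hτ : 0 < τ) (hb : AEStronglyMeasurable b μ)
    (y : E) : 0 < gaussConv τ μ b y :=
  integral_exp_pos (integrable_comp_sub continuous_gauss (norm_gauss_le_one hτ) hb y)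

variable [InnerProductSpace ℝ E]

variable (τ μ b) in
noncomputable def gaussConvMoment (y : E) : E := ∫ ω, gauss τ (y - b ω) • (y - b ω) ∂μ

variable (τ μ b) in
noncomputable def gaussConvSecondMoment (y : E) : E →L[ℝ] E :=
  ∫ ω, gauss τ (y - b ω) • (innerSL ℝ (y - b ω)).smulRight (y - b ω) ∂μ

variable [IsFiniteMeasure μ]

lemma integrable_gauss_smul (hτ : 0 < τ) (hb : AEStronglyMeasurable b μ) (y : E) :
    Integrable (fun ω => gauss τ (y - b ω) • (y - b ω)) μ :=
  integrable_comp_sub (F := fun u => gauss τ u • u) (by fun_prop) (norm_gauss_smul_le hτ) hb y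

lemma gaussConvSecondMoment_apply (hτ : 0 < τ) (hb : AEStronglyMeasurable b μ) (y v : E) :
    gaussConvSecondMoment τ μ b y v
      = ∫ ω, (gauss τ (y - b ω) * ⟪y - b ω, v⟫_ℝ) • (y - b ω) ∂μ := by
  rw [gaussConvSecondMoment, ContinuousLinearMap.integral_apply
    (integrable_comp_sub (by fun_prop) (norm_gauss_smul_smulRight_le hτ) hb y)]
  simp only [ContinuousLinearMap.smulRight_apply, smul_apply,
    innerSL_apply_apply, mul_smul]

variable [CompleteSpace E]

lemma hasGradientAt_gaussConv (hτ : 0 < τ) (hb : AEStronglyMeasurable b μ) (y : E) :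
    HasGradientAt (gaussConv τ μ b) (-τ⁻¹ • gaussConvMoment τ μ b y) y := by
  have hbound (u : E) : ‖innerSL ℝ (-τ⁻¹ • gauss τ u • u)‖ ≤ τ⁻¹ * (1 + 2 * τ) := by
    rw [innerSL_apply_norm, norm_smul, norm_neg, norm_inv, norm_of_nonneg hτ.le]
    exact mul_le_mul_of_nonneg_left (norm_gauss_smul_le hτ u) (inv_pos.mpr hτ).le
  have h := hasFDerivAt_integral_comp_sub (μ := μ) (F' := fun u => innerSL ℝ (-τ⁻¹ • gauss τ u • u))
    (fun u => (hasGradientAt_gauss u).hasFDerivAt) (norm_gauss_le_one hτ)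
    ((innerSL ℝ).continuous.comp (by fun_prop)) hbound hb y
  have hint : Integrable (fun ω => -τ⁻¹ • gauss τ (y - b ω) • (y - b ω)) μ :=
    (integrable_gauss_smul hτ hb y).smul _
  rwa [ContinuousLinearMap.integral_comp_commSL (by simp) _ hint, integral_smul] at h

lemma hasFDerivAt_gaussConvMoment (hτ : 0 < τ) (hb : AEStronglyMeasurable b μ) (y : E) :
    HasFDerivAt (gaussConvMoment τ μ b)
      (gaussConv τ μ b y • ContinuousLinearMap.id ℝ E - τ⁻¹ • gaussConvSecondMoment τ μ b y) y := by
  have hbound (u : E) :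
      ‖gauss τ u • ContinuousLinearMap.id ℝ E - τ⁻¹ • gauss τ u • (innerSL ℝ u).smulRight u‖
        ≤ 1 + τ⁻¹ * (2 * τ) := by
    refine (norm_sub_le _ _).trans (add_le_add ?_ ?_)
    · rw [norm_smul, norm_of_nonneg (gauss_pos u).le]
      exact mul_le_one₀ (gauss_le_one hτ u) (norm_nonneg _) ContinuousLinearMap.norm_id_le
    · rw [norm_smul, norm_inv, norm_of_nonneg hτ.le]
      exact mul_le_mul_of_nonneg_left (norm_gauss_smul_smulRight_le hτ u) (inv_pos.mpr hτ).le
  have h := hasFDerivAt_integral_comp_sub (μ := μ) hasFDerivAt_gauss_smul (norm_gauss_smul_le hτ)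
    (by fun_prop) hbound hb y
  have hint : Integrable (fun ω => τ⁻¹ • gauss τ (y - b ω) •
      (innerSL ℝ (y - b ω)).smulRight (y - b ω)) μ :=
    (integrable_comp_sub (by fun_prop) (norm_gauss_smul_smulRight_le hτ) hb y).smul τ⁻¹
  rwa [integral_sub
    ((integrable_comp_sub continuous_gauss (norm_gauss_le_one hτ) hb y).smul_const _) hint,
    integral_smul_const, integral_smul] at h

lemma hasGradientAt_log_const_mul_gaussConv [NeZero μ] (hτ : 0 < τ) {c : ℝ} (hc : 0 < c)
    (hb : AEStronglyMeasurable b μ) (y : E) :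
    HasGradientAt (fun y => log (c * gaussConv τ μ b y))
      (-τ⁻¹ • (gaussConv τ μ b y)⁻¹ • gaussConvMoment τ μ b y) y := by
  have hP := gaussConv_pos hτ hb y
  have h := ((hasGradientAt_gaussConv hτ hb y).hasFDerivAt.const_mul c).log (by positivity)
  rw [hasGradientAt_iff_hasFDerivAt]
  refine h.congr_fderiv ?_
  ext v
  simp only [neg_smul, map_neg, map_smul, smul_neg, neg_apply, smul_apply,
    InnerProductSpace.toDual_apply_apply, smul_eq_mul]
  field_simp

theorem fderiv_gradient_log_const_mul_gaussConv_apply [NeZero μ] (hτ : 0 < τ) {c : ℝ}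
    (hc : 0 < c) (hb : AEStronglyMeasurable b μ) (x v : E) :
    fderiv ℝ (gradient fun y => log (c * gaussConv τ μ b y)) x v
      = -τ⁻¹ • v + (τ ^ 2)⁻¹ • ((gaussConv τ μ b x)⁻¹ • gaussConvSecondMoment τ μ b x v
        - ⟪(gaussConv τ μ b x)⁻¹ • gaussConvMoment τ μ b x, v⟫_ℝ •
          (gaussConv τ μ b x)⁻¹ • gaussConvMoment τ μ b x) := by
  rw [gradient_eq fun y => hasGradientAt_log_const_mul_gaussConv hτ hc hb y]
  have hP := gaussConv_pos hτ hb x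
  have hinv :=
    (hasDerivAt_inv hP.ne').comp_hasFDerivAt x (hasGradientAt_gaussConv hτ hb x).hasFDerivAt
  have hder : HasFDerivAt (fun y => -τ⁻¹ • (gaussConv τ μ b y)⁻¹ • gaussConvMoment τ μ b y) _ x :=
    (hinv.smul (hasFDerivAt_gaussConvMoment hτ hb x)).const_smul (-τ⁻¹)
  rw [hder.fderiv]
  simp only [Function.comp_apply, neg_smul, map_neg, map_smul, smul_neg, neg_neg, smul_add,
    add_apply, neg_apply, smul_apply, sub_apply, ContinuousLinearMap.id_apply,
    ContinuousLinearMap.smulRight_apply, InnerProductSpace.toDual_apply_apply, smul_eq_mul,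
    real_inner_smul_left]
  match_scalars <;> field_simp

end GaussConv

theorem statement9_general
    (d : ℕ) (μ : Measure (EuclideanSpace ℝ (Fin d))) [IsProbabilityMeasure μ]
    (τ : ℝ) (hτ0 : 0 < τ)
    (p : EuclideanSpace ℝ (Fin d) → ℝ)
    (hp : ∀ y, p y = ∫ x₀, (2 * π * τ) ^ (-(d : ℝ) / 2) *
        Real.exp (-‖y - Real.sqrt (1 - τ) • x₀‖ ^ 2 / (2 * τ)) ∂μ)
    (x : EuclideanSpace ℝ (Fin d))
    (w : EuclideanSpace ℝ (Fin d) → ℝ)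
    (hw : ∀ x₀, w x₀ = (2 * π * τ) ^ (-(d : ℝ) / 2) *
        Real.exp (-‖x - Real.sqrt (1 - τ) • x₀‖ ^ 2 / (2 * τ)))
    (cm : EuclideanSpace ℝ (Fin d))
    (hcm : cm = (p x)⁻¹ • ∫ x₀, w x₀ • (x - Real.sqrt (1 - τ) • x₀) ∂μ)
    (cq : EuclideanSpace ℝ (Fin d) → EuclideanSpace ℝ (Fin d))
    (hcq : ∀ v, cq v = (p x)⁻¹ •
      ∫ x₀, (w x₀ * (inner ℝ (x - Real.sqrt (1 - τ) • x₀) v : ℝ)) •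
        (x - Real.sqrt (1 - τ) • x₀) ∂μ) :
    ∀ v, fderiv ℝ (fun y => gradient (fun z => Real.log (p z)) y) x v
      = -(1 / τ) • v + (1 / τ ^ 2) • (cq v - (inner ℝ cm v : ℝ) • cm) := by
  intro v
  set c : ℝ := (2 * π * τ) ^ (-(d : ℝ) / 2)
  set b : EuclideanSpace ℝ (Fin d) → EuclideanSpace ℝ (Fin d) := fun x₀ => √(1 - τ) • x₀
  have hc : 0 < c := by positivity
  have hb : AEStronglyMeasurable b μ := (continuous_const_smul _).aestronglyMeasurable
  have hpP : p = fun y => c * gaussConv τ μ b y :=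
    funext fun y => (hp y).trans (integral_const_mul _ _)
  have hwc : w = fun x₀ => c * gauss τ (x - b x₀) := funext hw
  have hcm' : cm = (gaussConv τ μ b x)⁻¹ • gaussConvMoment τ μ b x := by
    rw [hcm, hpP, hwc]
    exact inv_mul_smul_integral_const_mul_smul hc.ne' _ _ _
  have hcq' : cq v = (gaussConv τ μ b x)⁻¹ • gaussConvSecondMoment τ μ b x v := by
    rw [hcq, hpP, hwc, gaussConvSecondMoment_apply hτ0 hb]
    simp only [mul_assoc]
    exact inv_mul_smul_integral_const_mul_smul hc.ne' _ _ _
  rw [hcq', hcm', hpP, fderiv_gradient_log_const_mul_gaussConv_apply hτ0 hc hb, one_div, one_div]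

/-- Jacobian of the score. With `X̄_τ = √(1-τ)X₀ + √τ Z` (`X₀ ~ p_data` with bounded
support, `Z ~ N(0,I_d)` independent) and score `s*_τ = ∇ log p_{X̄_τ}`, the Jacobian
satisfies `∂s*_τ(x)/∂x = -(1/τ) I_d + (1/τ²) Cov(X̄_τ - √(1-τ)X₀ | X̄_τ = x)`, where the
conditional covariance acts on a direction `v` as `E[⟪V,v⟫V | x] - ⟪E[V|x],v⟫ E[V|x]`
with `V = x - √(1-τ)X₀`. -/
theorem statement9
    (d : ℕ) (μ : Measure (EuclideanSpace ℝ (Fin d))) [IsProbabilityMeasure μ]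
    (R : ℝ) (hsupp : ∀ᵐ x₀ ∂μ, ‖x₀‖ ≤ R)
    (τ : ℝ) (hτ0 : 0 < τ) (hτ1 : τ < 1)
    (p : EuclideanSpace ℝ (Fin d) → ℝ)
    (hp : ∀ y, p y = ∫ x₀, (2 * π * τ) ^ (-(d : ℝ) / 2) *
        Real.exp (-‖y - Real.sqrt (1 - τ) • x₀‖ ^ 2 / (2 * τ)) ∂μ)
    (x : EuclideanSpace ℝ (Fin d)) (hpx : 0 < p x)
    (w : EuclideanSpace ℝ (Fin d) → ℝ)
    (hw : ∀ x₀, w x₀ = (2 * π * τ) ^ (-(d : ℝ) / 2) *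
        Real.exp (-‖x - Real.sqrt (1 - τ) • x₀‖ ^ 2 / (2 * τ)))
    (cm : EuclideanSpace ℝ (Fin d))
    (hcm : cm = (p x)⁻¹ • ∫ x₀, w x₀ • (x - Real.sqrt (1 - τ) • x₀) ∂μ)
    (cq : EuclideanSpace ℝ (Fin d) → EuclideanSpace ℝ (Fin d))
    (hcq : ∀ v, cq v = (p x)⁻¹ •
      ∫ x₀, (w x₀ * (inner ℝ (x - Real.sqrt (1 - τ) • x₀) v : ℝ)) •
        (x - Real.sqrt (1 - τ) • x₀) ∂μ) :
    ∀ v, fderiv ℝ (fun y => gradient (fun z => Real.log (p z)) y) x v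
      = -(1 / τ) • v + (1 / τ ^ 2) • (cq v - (inner ℝ cm v : ℝ) • cm) :=
  statement9_general d μ τ hτ0 p hp x w hw cm hcm cq hcq
end

section
/- Let A, B ∈ ℝ^{d×d} with B invertible. Then |det A - det B| / |det B| ≤ (‖B^{-1}‖ · ‖A - B‖ + 1)^d - 1 ≤ exp(d ‖B^{-1}‖ ‖A - B‖) - 1, where ‖·‖ is the spectral norm. -/
/-!
Writing `A = B (1 + E)` with `E = B⁻¹ (A - B)`, the relative error is `|det (1 + E) - 1|`.
Over `ℂ`, `det (1 + E)` is the product of the eigenvalues `1 + λ` of `1 + E`, and every eigenvalue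
`λ` of `E` satisfies `‖λ‖ ≤ ‖E‖ ≤ ‖B⁻¹‖ ‖A - B‖` (complexifying a real matrix does not increase its
spectral norm, as `‖E (x + i y)‖² = ‖E x‖² + ‖E y‖²`). Expanding the product, a product of `d` factors
each within `r` of `1` is within `(1 + r) ^ d - 1` of `1`; finally `1 + r ≤ exp r`.
-/

open Polynomial Matrix

theorem Multiset.norm_prod_sub_one_le {R : Type*} [NormedCommRing R] [NormOneClass R]
    (s : Multiset R) {r : ℝ} (h : ∀ a ∈ s, ‖a - 1‖ ≤ r) :
    ‖s.prod - 1‖ ≤ (1 + r) ^ Multiset.card s - 1 := by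
  induction s using Multiset.induction with
  | empty => simp
  | cons a s ih =>
    have ha : ‖a - 1‖ ≤ r := h a (Multiset.mem_cons_self a s)
    have hs := ih fun b hb => h b (Multiset.mem_cons_of_mem hb)
    have hprod : ‖s.prod‖ ≤ (1 + r) ^ Multiset.card s := by
      simpa using (norm_le_norm_add_norm_sub' s.prod 1).trans (by rw [norm_one]; linarith)
    rw [Multiset.prod_cons, Multiset.card_cons]
    calc ‖a * s.prod - 1‖ = ‖(a - 1) * s.prod + (s.prod - 1)‖ := by ring_nf
      _ ≤ ‖a - 1‖ * ‖s.prod‖ + ‖s.prod - 1‖ :=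
          (norm_add_le _ _).trans (by gcongr; exact norm_mul_le _ _)
      _ ≤ r * (1 + r) ^ Multiset.card s + ((1 + r) ^ Multiset.card s - 1) := by
          gcongr
          exact (norm_nonneg _).trans ha
      _ = (1 + r) ^ (Multiset.card s + 1) - 1 := by ring

theorem Real.add_one_pow_le_exp_mul {x : ℝ} (hx : -1 ≤ x) (n : ℕ) :
    (x + 1) ^ n ≤ Real.exp (n * x) := by
  rw [Real.exp_nat_mul]
  exact pow_le_pow_left₀ (by linarith) (Real.add_one_le_exp x) n

namespace EuclideanSpace

variable {n : Type*} [Fintype n]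

def re (v : EuclideanSpace ℂ n) : EuclideanSpace ℝ n := WithLp.toLp 2 fun i => (v i).re

def im (v : EuclideanSpace ℂ n) : EuclideanSpace ℝ n := WithLp.toLp 2 fun i => (v i).im

theorem norm_sq_eq_norm_re_sq_add_norm_im_sq (v : EuclideanSpace ℂ n) :
    ‖v‖ ^ 2 = ‖re v‖ ^ 2 + ‖im v‖ ^ 2 := by
  simp only [EuclideanSpace.norm_sq_eq, ← Finset.sum_add_distrib, re, im, Real.norm_eq_abs,
    sq_abs, Complex.sq_norm, Complex.normSq_apply]
  exact Finset.sum_congr rfl fun i _ => by ring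

end EuclideanSpace

namespace Matrix

variable {n : Type*} [Fintype n] [DecidableEq n]

theorem re_toEuclideanCLM_map_ofReal (M : Matrix n n ℝ) (v : EuclideanSpace ℂ n) :
    EuclideanSpace.re (toEuclideanCLM (𝕜 := ℂ) (M.map Complex.ofReal) v) =
      toEuclideanCLM (𝕜 := ℝ) M (EuclideanSpace.re v) := by
  ext i
  simp [EuclideanSpace.re, mulVec, dotProduct, Complex.re_sum]

theorem im_toEuclideanCLM_map_ofReal (M : Matrix n n ℝ) (v : EuclideanSpace ℂ n) :
    EuclideanSpace.im (toEuclideanCLM (𝕜 := ℂ) (M.map Complex.ofReal) v) =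
      toEuclideanCLM (𝕜 := ℝ) M (EuclideanSpace.im v) := by
  ext i
  simp [EuclideanSpace.im, mulVec, dotProduct, Complex.im_sum]

theorem norm_toEuclideanCLM_map_ofReal_le (M : Matrix n n ℝ) :
    ‖toEuclideanCLM (𝕜 := ℂ) (M.map Complex.ofReal)‖ ≤ ‖toEuclideanCLM (𝕜 := ℝ) M‖ := by
  set T := toEuclideanCLM (𝕜 := ℝ) M
  refine ContinuousLinearMap.opNorm_le_bound _ (norm_nonneg T) fun v => ?_
  refine le_of_pow_le_pow_left₀ two_ne_zero (by positivity) ?_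
  calc ‖toEuclideanCLM (𝕜 := ℂ) (M.map Complex.ofReal) v‖ ^ 2
      = ‖T (EuclideanSpace.re v)‖ ^ 2 + ‖T (EuclideanSpace.im v)‖ ^ 2 := by
        rw [EuclideanSpace.norm_sq_eq_norm_re_sq_add_norm_im_sq, re_toEuclideanCLM_map_ofReal,
          im_toEuclideanCLM_map_ofReal]
    _ ≤ (‖T‖ * ‖EuclideanSpace.re v‖) ^ 2 + (‖T‖ * ‖EuclideanSpace.im v‖) ^ 2 := by
        gcongr <;> exact T.le_opNorm _
    _ = (‖T‖ * ‖v‖) ^ 2 := by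
        rw [mul_pow, mul_pow, mul_pow, EuclideanSpace.norm_sq_eq_norm_re_sq_add_norm_im_sq v]
        ring

theorem norm_le_norm_toEuclideanCLM_of_mem_spectrum {𝕜 : Type*} [RCLike 𝕜]
    {M : Matrix n n 𝕜} {μ : 𝕜} (hμ : μ ∈ spectrum 𝕜 M) :
    ‖μ‖ ≤ ‖toEuclideanCLM (𝕜 := 𝕜) M‖ := by
  rw [← AlgEquiv.spectrum_eq (toEuclideanCLM (𝕜 := 𝕜) (n := n))] at hμ
  exact (spectrum.norm_le_norm_mul_of_mem hμ).trans
    (mul_le_of_le_one_right (norm_nonneg _) ContinuousLinearMap.norm_id_le)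

theorem norm_det_one_add_sub_one_le (M : Matrix n n ℂ) :
    ‖(1 + M).det - 1‖ ≤ (1 + ‖toEuclideanCLM (𝕜 := ℂ) M‖) ^ Fintype.card n - 1 := by
  have hcard : Multiset.card (1 + M).charpoly.roots = Fintype.card n := by
    rw [splits_iff_card_roots.mp (IsAlgClosed.splits _), charpoly_natDegree_eq_dim]
  rw [det_eq_prod_roots_charpoly, ← hcard]
  refine Multiset.norm_prod_sub_one_le _ fun μ hμ => ?_
  have hμ' : μ - 1 + 1 ∈ spectrum ℂ (algebraMap ℂ _ 1 + M) := by
    rw [sub_add_cancel, map_one, mem_spectrum_iff_isRoot_charpoly]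
    exact isRoot_of_mem_roots hμ
  exact norm_le_norm_toEuclideanCLM_of_mem_spectrum (spectrum.add_mem_add_iff.mp hμ')

theorem abs_det_one_add_sub_one_le (M : Matrix n n ℝ) :
    |(1 + M).det - 1| ≤ (1 + ‖toEuclideanCLM (𝕜 := ℝ) M‖) ^ Fintype.card n - 1 := by
  have hdet : ((1 + M).det : ℂ) = (1 + M.map Complex.ofReal).det := by
    refine (Complex.ofRealHom.map_det (1 + M)).trans (congrArg det ?_)
    rw [RingHom.mapMatrix_apply, Matrix.map_add _ (map_add _), Matrix.map_one _ (map_zero _) (map_one _)]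
    rfl
  have hcomplex := norm_det_one_add_sub_one_le (M.map Complex.ofReal)
  rw [← hdet, ← Complex.ofReal_one, ← Complex.ofReal_sub, Complex.norm_real,
    Real.norm_eq_abs] at hcomplex
  exact hcomplex.trans (by gcongr; exact norm_toEuclideanCLM_map_ofReal_le M)

theorem det_one_add_inv_mul_sub (A B : Matrix n n ℝ) (hB : IsUnit B.det) :
    (1 + B⁻¹ * (A - B)).det = A.det / B.det := by
  rw [mul_sub, nonsing_inv_mul B hB, add_sub_cancel, det_mul, det_nonsing_inv,
    Ring.inverse_eq_inv, inv_mul_eq_div]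

end Matrix

/-- Relative determinant perturbation bound (Ipsen–Rehman). For `A, B ∈ ℝ^{d×d}` with `B`
invertible, `|det A - det B| / |det B| ≤ (‖B⁻¹‖·‖A - B‖ + 1)^d - 1 ≤ exp(d‖B⁻¹‖‖A-B‖) - 1`,
where `‖·‖` is the spectral norm (the operator norm of the induced map on `ℓ²`). -/
theorem statement13 (d : ℕ) (A B : Matrix (Fin d) (Fin d) ℝ) (hB : IsUnit B.det) :
    |A.det - B.det| / |B.det| ≤
      (‖Matrix.toEuclideanCLM (𝕜 := ℝ) B⁻¹‖ * ‖Matrix.toEuclideanCLM (𝕜 := ℝ) (A - B)‖ + 1) ^ d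
        - 1 ∧
    (‖Matrix.toEuclideanCLM (𝕜 := ℝ) B⁻¹‖ * ‖Matrix.toEuclideanCLM (𝕜 := ℝ) (A - B)‖ + 1) ^ d
        - 1 ≤
      Real.exp (d * ‖Matrix.toEuclideanCLM (𝕜 := ℝ) B⁻¹‖ *
        ‖Matrix.toEuclideanCLM (𝕜 := ℝ) (A - B)‖) - 1 := by
  set r := ‖toEuclideanCLM (𝕜 := ℝ) B⁻¹‖ * ‖toEuclideanCLM (𝕜 := ℝ) (A - B)‖
  have hr : 0 ≤ r := by positivity
  have hE : ‖toEuclideanCLM (𝕜 := ℝ) (B⁻¹ * (A - B))‖ ≤ r := by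
    rw [map_mul]
    exact norm_mul_le _ _
  refine ⟨?_, ?_⟩
  · calc |A.det - B.det| / |B.det| = |(1 + B⁻¹ * (A - B)).det - 1| := by
          rw [det_one_add_inv_mul_sub A B hB, ← abs_div, sub_div, div_self hB.ne_zero]
      _ ≤ (1 + ‖toEuclideanCLM (𝕜 := ℝ) (B⁻¹ * (A - B))‖) ^ d - 1 := by
          simpa using abs_det_one_add_sub_one_le (B⁻¹ * (A - B))
      _ ≤ (r + 1) ^ d - 1 := by rw [add_comm r]; gcongr
  · rw [mul_assoc]
    linarith [Real.add_one_pow_le_exp_mul (by linarith : -1 ≤ r) d]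
end
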